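/- Weak uncertainty principle: let φ ∈ L²(ℝ, ℂ) with ‖φ‖_{L²} = 1, ψ a unit-norm real window, and V_ψφ(x,ω) = √2 ∫_ℝ e^{−2πiωt} ψ(x−t)φ(t)dt. If U ⊆ ℝ² is measurable and ∫_U |V_ψφ(x,ω)|² dx dω ≥ 1 − ε for some ε ≥ 0, then the Lebesgue measure of U satisfies |U| ≥ (1 − ε)/2. -/

import Mathlib

/-! By Cauchy–Schwarz and translation invariance of Lebesgue measure, `|V_ψ f|² ≤ 2 ‖ψ‖² ‖f‖² = 2`
pointwise, so `1 - ε ≤ ∫_U |V_ψ f|² ≤ 2 |U|`. -/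

open Complex MeasureTheory

/-- The short-time Fourier transform with window `ψ`:
`V_ψ f(x, ω) = √2 ∫ e^{-2πiωt} ψ(x − t) f(t) dt`. -/
noncomputable def STFT (ψ : ℝ → ℝ) (f : ℝ → ℂ) (q : ℝ × ℝ) : ℂ :=
  (Real.sqrt 2 : ℂ) * ∫ t : ℝ,
    Complex.exp (-2 * (Real.pi : ℂ) * Complex.I * (q.2 : ℂ) * (t : ℂ)) * (ψ (q.1 - t) : ℂ) * f t

theorem integral_norm_mul_norm_sq_le {α E : Type*} [MeasurableSpace α] {μ : Measure α}
    [NormedAddCommGroup E] {f g : α → E} (hf : MemLp f 2 μ) (hg : MemLp g 2 μ) :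
    (∫ a, ‖f a‖ * ‖g a‖ ∂μ) ^ 2 ≤ (∫ a, ‖f a‖ ^ 2 ∂μ) * ∫ a, ‖g a‖ ^ 2 ∂μ := by
  have holder := integral_mul_norm_le_Lp_mul_Lq Real.HolderConjugate.two_two
    (by simpa using hf) (by simpa using hg)
  simp only [Real.rpow_two] at holder
  calc (∫ a, ‖f a‖ * ‖g a‖ ∂μ) ^ 2
      ≤ ((∫ a, ‖f a‖ ^ 2 ∂μ) ^ (1 / 2 : ℝ) * (∫ a, ‖g a‖ ^ 2 ∂μ) ^ (1 / 2 : ℝ)) ^ 2 :=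
        pow_le_pow_left₀ (integral_nonneg fun _ => by positivity) holder 2
    _ = (∫ a, ‖f a‖ ^ 2 ∂μ) * ∫ a, ‖g a‖ ^ 2 ∂μ := by
        rw [mul_pow, ← Real.sqrt_eq_rpow, ← Real.sqrt_eq_rpow,
          Real.sq_sqrt (integral_nonneg fun _ => by positivity),
          Real.sq_sqrt (integral_nonneg fun _ => by positivity)]

theorem norm_STFT_sq_le {ψ : ℝ → ℝ} (hψ : MemLp (fun t => (ψ t : ℂ)) 2 volume)
    {f : ℝ → ℂ} (hf : MemLp f 2 volume) (q : ℝ × ℝ) :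
    ‖STFT ψ f q‖ ^ 2 ≤ 2 * (∫ t, ψ t ^ 2) * ∫ t, ‖f t‖ ^ 2 := by
  obtain ⟨x, ω⟩ := q
  have hψx : MemLp (fun t => (ψ (x - t) : ℂ)) 2 volume :=
    hψ.comp_measurePreserving (Measure.measurePreserving_sub_left volume x)
  have norm_integrand (t : ℝ) :
      ‖cexp (-2 * Real.pi * I * ω * t) * (ψ (x - t) : ℂ) * f t‖ = ‖(ψ (x - t) : ℂ)‖ * ‖f t‖ := by
    rw [norm_mul, norm_mul, norm_exp]
    simp
  have translate : ∫ t : ℝ, ‖(ψ (x - t) : ℂ)‖ ^ 2 = ∫ t, ψ t ^ 2 := by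
    simp only [norm_real, Real.norm_eq_abs, sq_abs]
    exact integral_sub_left_eq_self (fun s => ψ s ^ 2) volume x
  have hI : ‖∫ t : ℝ, cexp (-2 * Real.pi * I * ω * t) * (ψ (x - t) : ℂ) * f t‖
      ≤ ∫ t : ℝ, ‖(ψ (x - t) : ℂ)‖ * ‖f t‖ :=
    (norm_integral_le_integral_norm _).trans_eq (integral_congr_ae (.of_forall norm_integrand))
  calc ‖STFT ψ f (x, ω)‖ ^ 2
      = 2 * ‖∫ t : ℝ, cexp (-2 * Real.pi * I * ω * t) * (ψ (x - t) : ℂ) * f t‖ ^ 2 := by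
        simp [STFT, mul_pow]
    _ ≤ 2 * (∫ t : ℝ, ‖(ψ (x - t) : ℂ)‖ * ‖f t‖) ^ 2 := by gcongr
    _ ≤ 2 * ((∫ t : ℝ, ‖(ψ (x - t) : ℂ)‖ ^ 2) * ∫ t, ‖f t‖ ^ 2) := by
        gcongr; exact integral_norm_mul_norm_sq_le hψx hf
    _ = 2 * (∫ t, ψ t ^ 2) * ∫ t, ‖f t‖ ^ 2 := by rw [translate, mul_assoc]

theorem ofReal_div_le_measure_of_le_setIntegral {α : Type*} [MeasurableSpace α] {μ : Measure α}
    {F : α → ℝ} {U : Set α} {a C : ℝ} (hC : 0 < C) (hF : ∀ x ∈ U, ‖F x‖ ≤ C)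
    (ha : a ≤ ∫ x in U, F x ∂μ) : ENNReal.ofReal (a / C) ≤ μ U := by
  rcases eq_top_or_lt_top (μ U) with hU | hU
  · simp [hU]
  refine ENNReal.ofReal_le_of_le_toReal ?_
  rw [div_le_iff₀' hC]
  calc a ≤ ∫ x in U, F x ∂μ := ha
    _ ≤ ‖∫ x in U, F x ∂μ‖ := Real.le_norm_self _
    _ ≤ C * μ.real U := norm_setIntegral_le_of_norm_le_const hU hF

theorem STFT_weak_uncertainty_general (ψ : ℝ → ℝ)
    (hψmem : MemLp (fun t => (ψ t : ℂ)) 2 (volume : Measure ℝ))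
    (hψ : ∫ t : ℝ, (ψ t) ^ 2 = 1)
    (f : ℝ → ℂ) (hf : MemLp f 2 (volume : Measure ℝ))
    (hfnorm : ∫ t : ℝ, ‖f t‖ ^ 2 = 1)
    (U : Set (ℝ × ℝ)) (ε : ℝ)
    (hconc : 1 - ε ≤ ∫ q in U, ‖STFT ψ f q‖ ^ 2) :
    ENNReal.ofReal ((1 - ε) / 2) ≤ volume U := by
  refine ofReal_div_le_measure_of_le_setIntegral two_pos (fun q _ => ?_) hconc
  simpa [hψ, hfnorm] using norm_STFT_sq_le hψmem hf q

theorem STFT_weak_uncertainty (ψ : ℝ → ℝ)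
    (hψmem : MemLp (fun t => (ψ t : ℂ)) 2 (volume : Measure ℝ))
    (hψ : ∫ t : ℝ, (ψ t) ^ 2 = 1)
    (f : ℝ → ℂ) (hf : MemLp f 2 (volume : Measure ℝ))
    (hfnorm : ∫ t : ℝ, ‖f t‖ ^ 2 = 1)
    (U : Set (ℝ × ℝ)) (hU : MeasurableSet U) (ε : ℝ) (hε : 0 ≤ ε)
    (hconc : 1 - ε ≤ ∫ q in U, ‖STFT ψ f q‖ ^ 2) :
    ENNReal.ofReal ((1 - ε) / 2) ≤ volume U :=
  STFT_weak_uncertainty_general ψ hψmem hψ f hf hfnorm U ε hconc
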